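/- arXiv:math/9706202 — 5 statements merged into one kernel-verified Lean document; each statement's English description precedes it below -/
import Mathlib

section
/- For a real number p > 0, the equation (1+x)^{p+2} = (1-x)^{p+2} has a nonzero solution x in the open unit disc of ℂ if and only if p > 2. (Here z^{p+2} denotes the principal branch of the complex power, which is well defined since (1±x)/|1±x| lies in the right half plane when |x|<1.) -/
open Complex Metric
open scoped Real

/-!
Write `s = p + 2`. As `s` is real, `(1 + x) ^ s = (1 - x) ^ s` forces `‖1 + x‖ = ‖1 - x‖`, so
`x = t * I` is purely imaginary, and then `s * (arg (1 + t I) - arg (1 - t I)) = 2 s arctan t`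
must be a multiple of `2π`. For `0 < |t| < 1` we have `0 < |arctan t| < π / 4`, so this happens
exactly when `s > 4`, with the solution `t = tan (π / s)`.
-/

lemma Real.abs_arctan_lt_pi_div_four {t : ℝ} (ht : |t| < 1) : |arctan t| < π / 4 := by
  rw [← arctan_one, abs_lt, ← arctan_neg]
  rw [abs_lt] at ht
  exact ⟨arctan_strictMono ht.1, arctan_strictMono ht.2⟩

lemma Complex.arg_one_add_ofReal_mul_I (t : ℝ) : arg (1 + t * I) = Real.arctan t := by
  have hre : 0 < (1 + t * I).re := by simp
  have h := abs_lt.1 (abs_arg_lt_pi_div_two_iff.2 (Or.inl hre))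
  rw [← Real.arctan_tan h.1 h.2, tan_arg]
  simp

lemma Complex.arg_one_sub_ofReal_mul_I (t : ℝ) : arg (1 - t * I) = -Real.arctan t := by
  rw [← Real.arctan_neg, ← arg_one_add_ofReal_mul_I]
  push_cast
  ring_nf

lemma Complex.norm_one_add_eq_norm_one_sub_iff {x : ℂ} : ‖1 + x‖ = ‖1 - x‖ ↔ x.re = 0 := by
  rw [← sq_eq_sq₀ (norm_nonneg _) (norm_nonneg _), Complex.sq_norm, Complex.sq_norm,
    normSq_apply, normSq_apply]
  simp only [add_re, sub_re, add_im, sub_im, one_re, one_im]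
  constructor <;> intro h <;> nlinarith

lemma Complex.cpow_ofReal_eq_cpow_ofReal_iff {z w : ℂ} (hz : z ≠ 0) (hw : w ≠ 0) {s : ℝ}
    (hs : s ≠ 0) :
    z ^ (s : ℂ) = w ^ (s : ℂ) ↔ ‖z‖ = ‖w‖ ∧ ∃ n : ℤ, s * (arg z - arg w) = n * (2 * π) := by
  have hnorm : Real.log ‖z‖ * s = Real.log ‖w‖ * s ↔ ‖z‖ = ‖w‖ := by
    rw [mul_left_inj' hs]
    exact Real.log_injOn_pos.eq_iff (norm_pos_iff.2 hz) (norm_pos_iff.2 hw)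
  rw [cpow_def_of_ne_zero hz, cpow_def_of_ne_zero hw, exp_eq_exp_iff_exists_int]
  simp only [Complex.ext_iff, mul_re, mul_im, log_re, log_im, ofReal_re, ofReal_im, add_re,
    add_im, intCast_re, intCast_im, I_re, I_im, re_ofNat, im_ofNat]
  simp only [mul_zero, sub_zero, zero_mul, mul_one, add_zero, zero_add, sub_self,
    exists_and_left]
  exact and_congr hnorm (exists_congr fun n ↦ by constructor <;> intro h <;> linarith)

lemma Complex.one_add_ofReal_mul_I_cpow_eq_iff (t : ℝ) {s : ℝ} (hs : s ≠ 0) :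
    (1 + t * I) ^ (s : ℂ) = (1 - t * I) ^ (s : ℂ) ↔ ∃ n : ℤ, s * Real.arctan t = n * π := by
  have hnorm : ‖1 + t * I‖ = ‖1 - t * I‖ := norm_one_add_eq_norm_one_sub_iff.2 (by simp)
  have h₁ : 1 + t * I ≠ 0 := fun h ↦ by simpa using congrArg re h
  have h₂ : 1 - t * I ≠ 0 := fun h ↦ by simpa using congrArg re h
  rw [cpow_ofReal_eq_cpow_ofReal_iff h₁ h₂ hs, arg_one_add_ofReal_mul_I,
    arg_one_sub_ofReal_mul_I]
  exact (and_iff_right hnorm).trans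
    (exists_congr fun n ↦ by constructor <;> intro h <;> linarith)

lemma Complex.re_eq_zero_of_one_add_cpow_eq_one_sub_cpow {x : ℂ} (hx : ‖x‖ < 1) {s : ℝ}
    (hs : s ≠ 0) (h : (1 + x) ^ (s : ℂ) = (1 - x) ^ (s : ℂ)) : x.re = 0 := by
  have h₁ : 1 + x ≠ 0 := fun h ↦ by simp [eq_neg_of_add_eq_zero_right h] at hx
  have h₂ : 1 - x ≠ 0 := fun h ↦ by simp [← eq_of_sub_eq_zero h] at hx
  rw [cpow_ofReal_eq_cpow_ofReal_iff h₁ h₂ hs] at h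
  exact norm_one_add_eq_norm_one_sub_iff.1 h.1

lemma Real.exists_mul_arctan_eq_int_mul_pi_iff {s : ℝ} (hs : 0 < s) :
    (∃ t : ℝ, t ≠ 0 ∧ |t| < 1 ∧ ∃ n : ℤ, s * arctan t = n * π) ↔ 4 < s := by
  constructor
  · rintro ⟨t, ht0, ht1, n, hn⟩
    have hn0 : n ≠ 0 := by
      rintro rfl
      simp [hs.ne', arctan_eq_zero_iff, ht0] at hn
    have hn1 : (1 : ℝ) ≤ |(n : ℝ)| := by exact_mod_cast Int.one_le_abs hn0
    have : π * 4 < s * π := by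
      calc π * 4 ≤ |(n : ℝ)| * π * 4 := by nlinarith [pi_pos]
        _ = s * |arctan t| * 4 := by
          rw [← abs_of_pos hs, ← abs_mul, hn, abs_mul, abs_of_pos pi_pos]
        _ < s * π := by nlinarith [abs_arctan_lt_pi_div_four ht1]
    nlinarith [pi_pos]
  · intro hs4
    have hθ : π / s < π / 4 := div_lt_div_of_pos_left pi_pos (by norm_num) hs4
    have hθ0 : 0 < π / s := by positivity
    have htan0 : 0 < tan (π / s) := tan_pos_of_pos_of_lt_pi_div_two hθ0 (by linarith)
    have htan1 : tan (π / s) < 1 := by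
      simpa using tan_lt_tan_of_nonneg_of_lt_pi_div_two hθ0.le (by linarith) hθ
    refine ⟨tan (π / s), htan0.ne', by rwa [abs_of_pos htan0], 1, ?_⟩
    rw [arctan_tan (by linarith) (by linarith)]
    field_simp
    simp

theorem power_equation_nonzero_solution_iff (p : ℝ) (hp : 0 < p) :
    (∃ x : ℂ, x ≠ 0 ∧ ‖x‖ < 1 ∧
      (1 + x) ^ ((p : ℂ) + 2) = (1 - x) ^ ((p : ℂ) + 2)) ↔ 2 < p := by
  have hs : (p : ℂ) + 2 = ((p + 2 : ℝ) : ℂ) := by push_cast; ring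
  have hs0 : p + 2 ≠ 0 := by positivity
  rw [hs]
  calc _ ↔ ∃ t : ℝ, t ≠ 0 ∧ |t| < 1 ∧
        (1 + t * I) ^ ((p + 2 : ℝ) : ℂ) = (1 - t * I) ^ ((p + 2 : ℝ) : ℂ) := by
        constructor
        · rintro ⟨x, hx0, hx1, h⟩
          have hx : x = x.im * I := by
            simpa [re_eq_zero_of_one_add_cpow_eq_one_sub_cpow hx1 hs0 h] using (re_add_im x).symm
          rw [hx] at hx0 hx1 h
          exact ⟨x.im, by simpa using hx0, by simpa using hx1, h⟩
        · rintro ⟨t, ht0, ht1, h⟩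
          exact ⟨t * I, by simpa using ht0, by simpa using ht1, h⟩
    _ ↔ ∃ t : ℝ, t ≠ 0 ∧ |t| < 1 ∧ ∃ n : ℤ, (p + 2) * Real.arctan t = n * π := by
        simp only [one_add_ofReal_mul_I_cpow_eq_iff _ hs0]
    _ ↔ 4 < p + 2 := Real.exists_mul_arctan_eq_int_mul_pi_iff (by positivity)
    _ ↔ 2 < p := by constructor <;> intro h <;> linarith
end

section
/- Let p and q be positive real numbers and R > 0. The Lebesgue volume (in ℝ⁴ ≅ ℂ²) of the region {(ζ₁, ζ₂) ∈ ℂ² : |ζ₁|^{2/p} + |ζ₂|^{2/q} < R} equals π² Γ(p+1) Γ(q+1) R^{p+q} / Γ(p+q+1). -/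
/-!
By Fubini, slicing at fixed `ζ₁` leaves the disc `|ζ₂| < (R - |ζ₁|^{2/p})^{q/2}` of area
`π (R - |ζ₁|^{2/p})^q`. Integrating this radial function over `ℂ` in polar coordinates and
substituting `t = r^{2/p}` turns the volume into `p π² ∫₀^R t^{p-1} (R - t)^q dt`, a scaled Beta
integral equal to `π² p Γ(p) Γ(q+1) R^{p+q} / Γ(p+q+1)`.
-/

open MeasureTheory Real Set

theorem Real.intervalIntegral_rpow_mul_sub_rpow {a b R : ℝ} (ha : 0 < a) (hb : 0 < b)
    (hR : 0 < R) :
    ∫ x in (0)..R, x ^ (a - 1) * (R - x) ^ (b - 1) =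
      R ^ (a + b - 1) * ProbabilityTheory.beta a b := by
  have hcast : ∫ x in (0)..R, (x : ℂ) ^ ((a : ℂ) - 1) * ((R : ℂ) - x) ^ ((b : ℂ) - 1) =
      ((∫ x in (0)..R, x ^ (a - 1) * (R - x) ^ (b - 1) : ℝ) : ℂ) := by
    rw [← intervalIntegral.integral_ofReal]
    refine intervalIntegral.integral_congr fun x hx => ?_
    rw [uIcc_of_le hR.le] at hx
    push_cast [Complex.ofReal_cpow hx.1, Complex.ofReal_cpow (sub_nonneg.2 hx.2)]
    ring_nf
  have h := congrArg Complex.re (Complex.betaIntegral_scaled a b hR)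
  rwa [hcast, Complex.ofReal_re, ← Complex.ofReal_one, ← Complex.ofReal_add,
    ← Complex.ofReal_sub, ← Complex.ofReal_cpow hR.le, Complex.re_ofReal_mul,
    ← ProbabilityTheory.beta_eq_betaIntegralReal a b ha hb] at h

theorem integral_Ioi_rpow_mul_max_sub_rpow {p q R : ℝ} (hp : 0 < p) (hq : 0 < q) (hR : 0 < R) :
    ∫ t in Ioi (0 : ℝ), t ^ (p - 1) * max (R - t) 0 ^ q =
      R ^ (p + q) * ProbabilityTheory.beta p (q + 1) := by
  have hvanish : ∀ t ∈ Ioi (0 : ℝ) \ Ioc 0 R, t ^ (p - 1) * max (R - t) 0 ^ q = 0 :=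
    fun t ht => by rw [max_eq_right (by grind), zero_rpow hq.ne', mul_zero]
  rw [setIntegral_eq_of_subset_of_forall_sdiff_eq_zero measurableSet_Ioi Ioc_subset_Ioi_self
    hvanish, ← intervalIntegral.integral_of_le hR.le]
  have hbeta := Real.intervalIntegral_rpow_mul_sub_rpow hp (by positivity : 0 < q + 1) hR
  rw [add_sub_cancel_right, ← add_assoc, add_sub_cancel_right] at hbeta
  rw [← hbeta]
  refine intervalIntegral.integral_congr fun t ht => ?_
  rw [uIcc_of_le hR.le] at ht
  simp only [max_eq_left (sub_nonneg.2 ht.2)]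

theorem integral_Ioi_smul_comp_rpow {E : Type*} [NormedAddCommGroup E] [NormedSpace ℝ E]
    {p : ℝ} (hp : 0 < p) (h : ℝ → E) :
    ∫ r in Ioi (0 : ℝ), r • h (r ^ (2 / p)) =
      (p / 2) • ∫ t in Ioi (0 : ℝ), t ^ (p - 1) • h t := by
  rw [← integral_comp_rpow_Ioi_of_pos (g := fun t => t ^ (p - 1) • h t)
    (by positivity : 0 < 2 / p), ← integral_smul]
  refine setIntegral_congr_fun measurableSet_Ioi fun r (hr : 0 < r) => ?_
  have hpow : r ^ (2 / p - 1) * (r ^ (2 / p)) ^ (p - 1) = r := by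
    rw [← rpow_mul hr.le, ← rpow_add hr]
    field_simp
    ring_nf
    rw [mul_inv_cancel₀ hp.ne', rpow_one]
  simp only [smul_smul]
  congr 1
  rw [mul_assoc (2 / p), hpow]
  field_simp

namespace Complex

theorem volume_setOf_norm_rpow_lt {q : ℝ} (hq : 0 < q) (c : ℝ) :
    volume {z : ℂ | ‖z‖ ^ (2 / q) < c} = ENNReal.ofReal (π * max c 0 ^ q) := by
  rcases le_or_gt c 0 with hc | hc
  · have hempty : {z : ℂ | ‖z‖ ^ (2 / q) < c} = ∅ :=
      eq_empty_of_forall_notMem fun z hz => (hz.trans_le hc).not_ge (by positivity)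
    simp [hempty, max_eq_right hc, zero_rpow hq.ne']
  · have hball : {z : ℂ | ‖z‖ ^ (2 / q) < c} = Metric.ball 0 (c ^ (q / 2)) := by
      ext z
      rw [mem_ofPred_eq, mem_ball_zero_iff, ← inv_div,
        rpow_inv_lt_iff_of_pos (norm_nonneg z) hc.le (by positivity)]
    rw [hball, volume_ball, ← ENNReal.ofReal_pow (by positivity), ← rpow_mul_natCast hc.le,
      max_eq_left hc.le, ← NNReal.coe_real_pi, ENNReal.ofReal_coe_nnreal.symm,
      ← ENNReal.ofReal_mul (by positivity), mul_comm]
    norm_num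

theorem integral_comp_norm {E : Type*} [NormedAddCommGroup E] [NormedSpace ℝ E] (g : ℝ → E) :
    ∫ z : ℂ, g ‖z‖ = (2 * π) • ∫ r in Ioi (0 : ℝ), r • g r := by
  rw [integral_fun_norm_addHaar volume g, finrank_real_complex, measureReal_def, volume_ball]
  simp [mul_smul, two_smul]

theorem integral_comp_norm_rpow {E : Type*} [NormedAddCommGroup E] [NormedSpace ℝ E] {p : ℝ}
    (hp : 0 < p) (h : ℝ → E) :
    ∫ z : ℂ, h (‖z‖ ^ (2 / p)) = (p * π) • ∫ t in Ioi (0 : ℝ), t ^ (p - 1) • h t := by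
  rw [integral_comp_norm (fun r => h (r ^ (2 / p))), integral_Ioi_smul_comp_rpow hp, smul_smul]
  ring_nf

theorem integrable_max_sub_norm_rpow_rpow {p q : ℝ} (hp : 0 < p) (hq : 0 < q) (R : ℝ) :
    Integrable fun z : ℂ => max (R - ‖z‖ ^ (2 / p)) 0 ^ q := by
  refine Continuous.integrable_of_hasCompactSupport (by fun_prop (disch := positivity)) <|
    HasCompactSupport.intro (isCompact_closedBall 0 (R ^ (p / 2))) fun z hz => ?_
  rw [mem_closedBall_zero_iff, not_le] at hz
  have hRz : R ≤ ‖z‖ ^ (2 / p) := by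
    rcases le_or_gt R 0 with hR | hR
    · exact hR.trans (by positivity)
    · rw [← inv_div] at hz
      exact ((rpow_inv_lt_iff_of_pos hR.le (norm_nonneg z) (by positivity)).1 hz).le
  rw [max_eq_right (sub_nonpos.2 hRz), zero_rpow hq.ne']

end Complex

theorem volume_egg_domain (p q R : ℝ) (hp : 0 < p) (hq : 0 < q) (hR : 0 < R) :
    volume {ζ : ℂ × ℂ | ‖ζ.1‖ ^ (2 / p) + ‖ζ.2‖ ^ (2 / q) < R} =
      ENNReal.ofReal
        (π ^ 2 * Gamma (p + 1) * Gamma (q + 1) * R ^ (p + q) / Gamma (p + q + 1)) := by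
  have hS : MeasurableSet {ζ : ℂ × ℂ | ‖ζ.1‖ ^ (2 / p) + ‖ζ.2‖ ^ (2 / q) < R} :=
    measurableSet_lt (by fun_prop) measurable_const
  have hslice (x : ℂ) :
      volume (Prod.mk x ⁻¹' {ζ : ℂ × ℂ | ‖ζ.1‖ ^ (2 / p) + ‖ζ.2‖ ^ (2 / q) < R}) =
        ENNReal.ofReal (π * max (R - ‖x‖ ^ (2 / p)) 0 ^ q) := by
    rw [← Complex.volume_setOf_norm_rpow_lt hq]
    congr 1 with y
    simp [lt_sub_iff_add_lt']
  rw [Measure.volume_eq_prod, Measure.prod_apply hS, lintegral_congr hslice,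
    ← ofReal_integral_eq_lintegral_ofReal
      ((Complex.integrable_max_sub_norm_rpow_rpow hp hq R).const_mul π)
      (ae_of_all _ fun _ => by positivity),
    Complex.integral_comp_norm_rpow hp (fun t => π * max (R - t) 0 ^ q)]
  simp_rw [smul_eq_mul, mul_left_comm _ π, integral_const_mul,
    integral_Ioi_rpow_mul_max_sub_rpow hp hq hR, ProbabilityTheory.beta, Gamma_add_one hp.ne',
    ← add_assoc]
  congr 1
  ring
end

section
/- The function K₂(x,y) = (2/π²) · (3(1−x−y)(1−(x−y)²) + 8xy) / ((1−x−y)² − 4xy)³ has no zero for complex x, y with √|x| + √|y| < 1; moreover it has a boundary zero: at x = −1, y = 0 (i.e. z₁ = 1, w₁ = −1, z₂ = w₂ = 0) the numerator 3(1−x−y)(1−(x−y)²)+8xy vanishes. -/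
open Real

theorem K2_no_interior_zero_boundary_zero :
    (∀ x y : ℂ, Real.sqrt ‖x‖ + Real.sqrt ‖y‖ < 1 →
      (2 / (π : ℂ) ^ 2) * (3 * (1 - x - y) * (1 - (x - y) ^ 2) + 8 * x * y) /
        (((1 - x - y) ^ 2 - 4 * x * y) ^ 3) ≠ 0) ∧
    (3 * (1 - (-1 : ℂ) - 0) * (1 - ((-1 : ℂ) - 0) ^ 2) + 8 * (-1) * 0 = 0) := by
  constructor
  · intro x y h
    set s := Real.sqrt ‖x‖ with hs
    set t := Real.sqrt ‖y‖ with ht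
    have hs0 : 0 ≤ s := Real.sqrt_nonneg _
    have ht0 : 0 ≤ t := Real.sqrt_nonneg _
    have hxs : ‖x‖ = s ^ 2 := (Real.sq_sqrt (norm_nonneg x)).symm
    have hys : ‖y‖ = t ^ 2 := (Real.sq_sqrt (norm_nonneg y)).symm
    have hst : s + t < 1 := h
    -- lower bound for ‖1 - x - y‖
    have hb1 : 1 - s ^ 2 - t ^ 2 ≤ ‖1 - x - y‖ := by
      have h1 : ‖(1 : ℂ)‖ - ‖x + y‖ ≤ ‖1 - (x + y)‖ := norm_sub_norm_le _ _
      have h2 : ‖x + y‖ ≤ ‖x‖ + ‖y‖ := norm_add_le _ _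
      have h3 : (1 : ℂ) - (x + y) = 1 - x - y := by ring
      rw [h3] at h1
      simp only [norm_one] at h1
      rw [hxs, hys] at h2
      linarith
    -- lower bound for ‖1 - (x-y)^2‖
    have hb2 : 1 - (s ^ 2 + t ^ 2) ^ 2 ≤ ‖1 - (x - y) ^ 2‖ := by
      have h1 : ‖(1 : ℂ)‖ - ‖(x - y) ^ 2‖ ≤ ‖1 - (x - y) ^ 2‖ := norm_sub_norm_le _ _
      have h2 : ‖(x - y) ^ 2‖ = ‖x - y‖ ^ 2 := norm_pow _ _
      have h3 : ‖x - y‖ ≤ ‖x‖ + ‖y‖ := norm_sub_le _ _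
      have h4 : ‖x - y‖ ^ 2 ≤ (‖x‖ + ‖y‖) ^ 2 := by
        apply pow_le_pow_left₀ (norm_nonneg _) h3
      rw [hxs, hys] at h4
      simp only [norm_one] at h1
      rw [h2] at h1
      linarith
    have hden : (1 - x - y) ^ 2 - 4 * x * y ≠ 0 := by
      intro hz
      rw [sub_eq_zero] at hz
      have he : ‖(1 - x - y) ^ 2‖ = ‖4 * x * y‖ := by rw [hz]
      have h4 : ‖(4 : ℂ) * x * y‖ = 4 * (s ^ 2 * t ^ 2) := by
        rw [norm_mul, norm_mul, hxs, hys]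
        norm_num
        ring
      have h5 : ‖(1 - x - y) ^ 2‖ = ‖1 - x - y‖ ^ 2 := norm_pow _ _
      have h6 : (1 - s ^ 2 - t ^ 2) ^ 2 ≤ ‖1 - x - y‖ ^ 2 := by
        apply pow_le_pow_left₀ (by nlinarith) hb1
      have e1 : 2 * (s * t) < 1 - s ^ 2 - t ^ 2 := by nlinarith
      have e2 : 4 * (s ^ 2 * t ^ 2) < (1 - s ^ 2 - t ^ 2) ^ 2 := by
        nlinarith [mul_nonneg hs0 ht0, e1]
      linarith
    have hnum : 3 * (1 - x - y) * (1 - (x - y) ^ 2) + 8 * x * y ≠ 0 := by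
      intro hz
      have hz' : 3 * (1 - x - y) * (1 - (x - y) ^ 2) = -(8 * x * y) := by
        linear_combination hz
      have he : ‖3 * (1 - x - y) * (1 - (x - y) ^ 2)‖ = ‖-(8 * x * y)‖ := by rw [hz']
      have h4 : ‖-(8 * (x : ℂ) * y)‖ = 8 * (s ^ 2 * t ^ 2) := by
        rw [norm_neg, norm_mul, norm_mul, hxs, hys]
        norm_num
        ring
      have h5 : ‖3 * (1 - x - y) * (1 - (x - y) ^ 2)‖
          = 3 * (‖1 - x - y‖ * ‖1 - (x - y) ^ 2‖) := by
        rw [norm_mul, norm_mul]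
        norm_num
        ring
      have hc1 : (0 : ℝ) ≤ 1 - s ^ 2 - t ^ 2 := by nlinarith
      have hc2 : (0 : ℝ) ≤ 1 - (s ^ 2 + t ^ 2) ^ 2 := by nlinarith
      have h6 : (1 - s ^ 2 - t ^ 2) * (1 - (s ^ 2 + t ^ 2) ^ 2)
          ≤ ‖1 - x - y‖ * ‖1 - (x - y) ^ 2‖ :=
        mul_le_mul hb1 hb2 hc2 (le_trans hc1 hb1)
      have e1 : 2 * (s * t) < 1 - s ^ 2 - t ^ 2 := by nlinarith
      have e2 : 4 * (s ^ 2 * t ^ 2) < (1 - s ^ 2 - t ^ 2) ^ 2 := by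
        nlinarith [mul_nonneg hs0 ht0, e1]
      have e3 : 2 * (1 - s ^ 2 - t ^ 2) ^ 2
          ≤ 3 * ((1 - s ^ 2 - t ^ 2) * (1 - (s ^ 2 + t ^ 2) ^ 2)) := by
        nlinarith [mul_nonneg (sq_nonneg (1 - s ^ 2 - t ^ 2))
          (by nlinarith : (0:ℝ) ≤ 1 + 3 * (s ^ 2 + t ^ 2))]
      linarith
    have hpi : (2 : ℂ) / (π : ℂ) ^ 2 ≠ 0 := by
      apply div_ne_zero two_ne_zero
      exact pow_ne_zero _ (Complex.ofReal_ne_zero.mpr Real.pi_ne_zero)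
    exact div_ne_zero (mul_ne_zero hpi hnum) (pow_ne_zero _ hden)
  · norm_num
end

section
/- Let n ≥ 2 be an integer. The function on the unit disc t ↦ (1/(4t)) · ((1−t)^{-(n+1)} − (1+t)^{-(n+1)}), extended continuously at t = 0 by its limit (n+1)/2, has a zero in the open unit disc if and only if n + 1 > 4, i.e. n ≥ 4. -/
/-!
For `t ≠ 0` the kernel vanishes exactly when `(1 - t)^m = (1 + t)^m`, where `m = n + 1`.
Since `1 ± i tan θ = e^{± iθ} / cos θ`, the point `t = i tan (π / m)` is such a zero, and it lies
in the disc as soon as `π / m < π / 4`. For `m ≤ 4`, `(1 + t)^m - (1 - t)^m` is a nonzero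
multiple of `t`, `t (t² + 3)` or `t (t² + 1)`, so each of its nonzero roots has modulus at least `1`.
-/

open Complex Real

lemma one_add_I_mul_tan_mul_cos {θ : ℝ} (h : Real.cos θ ≠ 0) :
    (1 + I * Real.tan θ) * Real.cos θ = exp (θ * I) := by
  rw [add_mul, one_mul, mul_assoc, ← ofReal_mul, Real.tan_mul_cos h, exp_mul_I, ofReal_cos,
    ofReal_sin]
  ring

lemma one_sub_I_mul_tan_pi_div_pow (m : ℕ) :
    (1 - I * Real.tan (π / m)) ^ m = (1 + I * Real.tan (π / m)) ^ m := by
  by_cases h : Real.cos (π / m) = 0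
  · simp [Real.tan_eq_sin_div_cos, h]
  obtain rfl | hm := eq_or_ne m 0
  · simp
  have hneg : 1 - I * Real.tan (π / m) = 1 + I * Real.tan (-(π / m)) := by
    rw [Real.tan_neg]; push_cast; ring
  have hπ : (m : ℂ) * ((π / m : ℝ) : ℂ) = π := by
    push_cast; field_simp
  apply mul_right_cancel₀ (pow_ne_zero m (ofReal_ne_zero.mpr h))
  rw [← mul_pow, ← mul_pow, hneg]
  nth_rw 1 [← Real.cos_neg]
  rw [one_add_I_mul_tan_mul_cos (by rwa [Real.cos_neg]), one_add_I_mul_tan_mul_cos h,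
    ← Complex.exp_nat_mul, ← Complex.exp_nat_mul, ofReal_neg, neg_mul, mul_neg, ← mul_assoc, hπ,
    exp_neg_pi_mul_I, exp_pi_mul_I]

lemma tan_pi_div_mem_Ioo {m : ℕ} (hm : 4 < m) : Real.tan (π / m) ∈ Set.Ioo 0 1 := by
  have hpos : 0 < π / m := by positivity
  have hlt : π / m < π / 4 := by gcongr; exact_mod_cast hm
  refine ⟨tan_pos_of_pos_of_lt_pi_div_two hpos (by linarith [pi_pos]), ?_⟩
  exact tan_pi_div_four ▸
    tan_lt_tan_of_lt_of_lt_pi_div_two (by linarith [pi_pos]) (by linarith [pi_pos]) hlt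

lemma one_sub_pow_ne_one_add_pow {m : ℕ} (hm₀ : 0 < m) (hm : m ≤ 4) {t : ℂ} (ht₀ : t ≠ 0)
    (ht : ‖t‖ < 1) : (1 - t) ^ m ≠ (1 + t) ^ m := by
  intro h
  interval_cases m
  · exact ht₀ (by linear_combination (-1 / 2 : ℂ) * h)
  · exact ht₀ (by linear_combination (-1 / 4 : ℂ) * h)
  · have : t ^ 2 = -3 := mul_left_cancel₀ ht₀ (by linear_combination (-1 / 2 : ℂ) * h)
    have : ‖t‖ ^ 2 = 3 := by simpa [norm_pow] using congrArg norm this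
    nlinarith [norm_nonneg t]
  · have : t ^ 2 = -1 := mul_left_cancel₀ ht₀ (by linear_combination (-1 / 8 : ℂ) * h)
    have : ‖t‖ ^ 2 = 1 := by simpa [norm_pow] using congrArg norm this
    nlinarith [norm_nonneg t]

lemma one_div_mul_zpow_neg_sub_eq_zero_iff {t : ℂ} (ht : t ≠ 0) (m : ℕ) :
    1 / (4 * t) * ((1 - t) ^ (-(m : ℤ)) - (1 + t) ^ (-(m : ℤ))) = 0 ↔
      (1 - t) ^ m = (1 + t) ^ m := by
  simp [ht, sub_eq_zero]

theorem folded_ball_kernel_zero_iff_general (n : ℕ) :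
    (∃ t : ℂ, ‖t‖ < 1 ∧
      (if t = 0 then ((n : ℂ) + 1) / 2
       else (1 / (4 * t)) * ((1 - t) ^ (-(n + 1 : ℤ)) - (1 + t) ^ (-(n + 1 : ℤ)))) = 0)
    ↔ 4 ≤ n := by
  have hzero {t : ℂ} (ht : t ≠ 0) := one_div_mul_zpow_neg_sub_eq_zero_iff ht (n + 1)
  push_cast at hzero
  constructor
  · rintro ⟨t, ht, hg⟩
    by_contra hn
    split_ifs at hg with ht₀
    · exact n.cast_add_one_ne_zero (by simpa using hg)
    · exact one_sub_pow_ne_one_add_pow n.succ_pos (by omega) ht₀ ht ((hzero ht₀).mp hg)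
  · intro hn
    obtain ⟨htan₀, htan₁⟩ := tan_pi_div_mem_Ioo (m := n + 1) (by omega)
    have ht₀ : I * Real.tan (π / (n + 1 : ℕ)) ≠ 0 :=
      mul_ne_zero I_ne_zero (ofReal_ne_zero.mpr htan₀.ne')
    refine ⟨I * Real.tan (π / (n + 1 : ℕ)), ?_, ?_⟩
    · rwa [norm_mul, norm_I, one_mul, norm_real, Real.norm_of_nonneg htan₀.le]
    · rw [if_neg ht₀, hzero ht₀]
      exact one_sub_I_mul_tan_pi_div_pow (n + 1)

theorem folded_ball_kernel_zero_iff (n : ℕ) (hn : 2 ≤ n) :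
    (∃ t : ℂ, ‖t‖ < 1 ∧
      (if t = 0 then ((n : ℂ) + 1) / 2
       else (1 / (4 * t)) * ((1 - t) ^ (-(n + 1 : ℤ)) - (1 + t) ^ (-(n + 1 : ℤ)))) = 0)
    ↔ 4 ≤ n :=
  folded_ball_kernel_zero_iff_general n
end

section
/- Let (f_k) be a sequence of holomorphic functions on a domain Ω ⊂ ℂⁿ converging uniformly on compact subsets to f, where f is not identically zero and f(z₀) = 0 for some z₀ ∈ Ω. Then for all sufficiently large k, f_k has a zero in Ω. (Hurwitz-type theorem in several variables, used to transfer zeroes of the Bergman kernel to approximating domains.) -/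
open Filter

/-- Identity theorem in several variables, proved by slicing along complex lines. -/
lemma identity_aux (n : ℕ) (Ω : Set (Fin n → ℂ))
    (hΩ : IsOpen Ω) (hconn : IsConnected Ω)
    (f : (Fin n → ℂ) → ℂ) (hf : DifferentiableOn ℂ f Ω)
    (z : Fin n → ℂ) (hz : z ∈ Ω) (h0 : ∀ᶠ x in nhds z, f x = 0) :
    ∀ x ∈ Ω, f x = 0 := by
  classical
  set S : Set (Fin n → ℂ) := {y | y ∈ Ω ∧ ∀ᶠ x in nhds y, f x = 0} with hSdef
  -- S is open
  have hSopen : IsOpen S := by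
    rw [isOpen_iff_forall_mem_open]
    rintro y ⟨hyΩ, hyev⟩
    rw [eventually_nhds_iff] at hyev
    obtain ⟨U, hU0, hUopen, hyU⟩ := hyev
    refine ⟨U ∩ Ω, ?_, hUopen.inter hΩ, hyU, hyΩ⟩
    rintro x ⟨hxU, hxΩ⟩
    refine ⟨hxΩ, ?_⟩
    filter_upwards [hUopen.mem_nhds hxU] with t ht using hU0 t ht
  -- S is closed in Ω
  have hSclosed : Ω ∩ closure S ⊆ S := by
    rintro y ⟨hyΩ, hycl⟩
    obtain ⟨r, hr, hball⟩ := Metric.isOpen_iff.1 hΩ y hyΩ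
    obtain ⟨s, hsS, hsd⟩ : ∃ s ∈ S, dist y s < r / 4 :=
      Metric.mem_closure_iff.1 hycl (r / 4) (by positivity)
    -- every point of ball y (r/4) is a zero of f
    have hkey : ∀ x ∈ Metric.ball y (r / 4), f x = 0 := by
      intro x hx
      set ψ : ℂ → (Fin n → ℂ) := fun t => s + t • (x - s) with hψdef
      have hψdiff : Differentiable ℂ ψ :=
        (differentiable_id.smul_const (x - s)).const_add s
      have hψmaps : Set.MapsTo ψ (Metric.ball (0 : ℂ) (3 / 2)) Ω := by
        intro t ht
        apply hball
        simp only [Metric.mem_ball, dist_zero_right] at ht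
        have hxs : ‖x - s‖ < r / 2 := by
          have h1 : dist x y < r / 4 := hx
          have h2 : dist y s < r / 4 := hsd
          calc ‖x - s‖ = dist x s := (dist_eq_norm x s).symm
            _ ≤ dist x y + dist y s := dist_triangle x y s
            _ < r / 4 + r / 4 := by linarith
            _ = r / 2 := by ring
        have : dist (ψ t) y ≤ dist (ψ t) s + dist s y := dist_triangle _ _ _
        have h3 : dist (ψ t) s = ‖t‖ * ‖x - s‖ := by
          simp [hψdef, dist_eq_norm, norm_smul, add_sub_cancel_left]
        have h4 : ‖t‖ * ‖x - s‖ ≤ (3 / 2) * ‖x - s‖ :=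
          mul_le_mul_of_nonneg_right ht.le (norm_nonneg _)
        have h5 : dist s y < r / 4 := by rwa [dist_comm]
        simp only [Metric.mem_ball]
        calc dist (ψ t) y ≤ dist (ψ t) s + dist s y := dist_triangle _ _ _
          _ < (3 / 2) * (r / 2) + r / 4 := by
              rw [h3]; nlinarith [h4, hxs, norm_nonneg t]
          _ = r := by ring
      set h : ℂ → ℂ := fun t => f (ψ t) with hhdef
      have hhd : DifferentiableOn ℂ h (Metric.ball (0 : ℂ) (3 / 2)) :=
        hf.comp hψdiff.differentiableOn hψmaps
      have hha : AnalyticOnNhd ℂ h (Metric.ball (0 : ℂ) (3 / 2)) :=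
        hhd.analyticOnNhd Metric.isOpen_ball
      have h0mem : (0 : ℂ) ∈ Metric.ball (0 : ℂ) (3 / 2) := by
        norm_num [Metric.mem_ball]
      have h1mem : (1 : ℂ) ∈ Metric.ball (0 : ℂ) (3 / 2) := by
        norm_num [Metric.mem_ball]
      have hψ0 : ψ 0 = s := by simp [hψdef]
      have hψ1 : ψ 1 = x := by simp [hψdef]
      have hhev : h =ᶠ[nhds 0] 0 := by
        have htd : Tendsto ψ (nhds 0) (nhds s) := by
          rw [← hψ0]; exact hψdiff.continuous.continuousAt
        filter_upwards [htd.eventually hsS.2] with t ht using ht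
      have := hha.eqOn_zero_of_preconnected_of_eventuallyEq_zero
        (convex_ball (0 : ℂ) (3 / 2)).isPreconnected h0mem hhev h1mem
      simpa [hhdef, hψ1] using this
    refine ⟨hyΩ, ?_⟩
    filter_upwards [Metric.ball_mem_nhds y (by positivity : (0:ℝ) < r / 4)] with x hx
      using hkey x hx
  -- clopen argument
  by_contra hcon
  push_neg at hcon
  obtain ⟨x, hxΩ, hxne⟩ := hcon
  have hxS : x ∉ S := fun hxS => hxne hxS.2.self_of_nhds
  have hxcl : x ∉ closure S := fun hc => hxS (hSclosed ⟨hxΩ, hc⟩)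
  have hzS : z ∈ S := ⟨hz, h0⟩
  obtain ⟨p, hp⟩ := hconn.isPreconnected S (Ω ∩ (closure S)ᶜ) hSopen
    (hΩ.inter isClosed_closure.isOpen_compl)
    (fun y hy => by
      by_cases hyc : y ∈ closure S
      · exact Or.inl (hSclosed ⟨hy, hyc⟩)
      · exact Or.inr ⟨hy, hyc⟩)
    ⟨z, hz, hzS⟩ ⟨x, hxΩ, hxΩ, hxcl⟩
  exact hp.2.2.2 (subset_closure hp.2.1)

theorem hurwitz_several_variables (n : ℕ) (Ω : Set (Fin n → ℂ))
    (hΩ : IsOpen Ω) (hconn : IsConnected Ω)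
    (f : (Fin n → ℂ) → ℂ) (F : ℕ → (Fin n → ℂ) → ℂ)
    (hf : DifferentiableOn ℂ f Ω) (hF : ∀ k, DifferentiableOn ℂ (F k) Ω)
    (hconv : TendstoLocallyUniformlyOn F f atTop Ω)
    (hne : ¬ ∀ z ∈ Ω, f z = 0)
    (z₀ : Fin n → ℂ) (hz₀ : z₀ ∈ Ω) (hzero : f z₀ = 0) :
    ∀ᶠ k in atTop, ∃ z ∈ Ω, F k z = 0 := by
  classical
  -- a ball around z₀ inside Ω
  obtain ⟨δ, hδ, hball⟩ := Metric.isOpen_iff.1 hΩ z₀ hz₀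
  set ε : ℝ := δ / 2 with hεdef
  have hε : 0 < ε := by positivity
  have hball2 : Metric.ball z₀ (2 * ε) ⊆ Ω := by
    simpa [hεdef, mul_div_cancel₀] using hball
  -- find w near z₀ with f w ≠ 0
  obtain ⟨w, hwball, hw⟩ : ∃ w ∈ Metric.ball z₀ ε, f w ≠ 0 := by
    by_contra h
    push_neg at h
    refine hne (identity_aux n Ω hΩ hconn f hf z₀ hz₀ ?_)
    filter_upwards [Metric.ball_mem_nhds z₀ hε] with x hx using h x hx
  -- the complex line through z₀ and w
  set L : ℂ → (Fin n → ℂ) := fun t => z₀ + t • (w - z₀) with hLdef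
  have hLcont : Differentiable ℂ L :=
    (differentiable_id.smul_const (w - z₀)).const_add z₀
  have hLmaps : Set.MapsTo L (Metric.ball (0 : ℂ) 2) Ω := by
    intro t ht
    apply hball2
    have h1 : dist (L t) z₀ = ‖t‖ * ‖w - z₀‖ := by
      simp [hLdef, dist_eq_norm, norm_smul]
    have h2 : ‖t‖ < 2 := by simpa using Metric.mem_ball.1 ht
    have h3 : ‖w - z₀‖ < ε := by
      simpa [dist_eq_norm] using Metric.mem_ball.1 hwball
    have : ‖t‖ * ‖w - z₀‖ < 2 * ε :=
      mul_lt_mul'' h2 h3 (norm_nonneg _) (norm_nonneg _)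
    simpa [Metric.mem_ball, h1] using this
  set g : ℂ → ℂ := fun t => f (L t) with hgdef
  have hgd : DifferentiableOn ℂ g (Metric.ball (0 : ℂ) 2) :=
    hf.comp hLcont.differentiableOn hLmaps
  have hga : AnalyticOnNhd ℂ g (Metric.ball (0 : ℂ) 2) :=
    hgd.analyticOnNhd Metric.isOpen_ball
  have h0mem : (0 : ℂ) ∈ Metric.ball (0 : ℂ) 2 := by simp
  have h1mem : (1 : ℂ) ∈ Metric.ball (0 : ℂ) 2 := by norm_num [Metric.mem_ball]
  have hg0 : g 0 = 0 := by simp [hgdef, hLdef, hzero]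
  have hg1 : g 1 ≠ 0 := by simpa [hgdef, hLdef] using hw
  -- g has isolated zeros at 0
  have hiso : ∀ᶠ t in nhdsWithin 0 {(0 : ℂ)}ᶜ, g t ≠ 0 := by
    rcases (hga 0 h0mem).eventually_eq_zero_or_eventually_ne_zero with h | h
    · exact absurd (hga.eqOn_zero_of_preconnected_of_eventuallyEq_zero
        (convex_ball (0 : ℂ) 2).isPreconnected h0mem h h1mem) hg1
    · exact h
  rw [eventually_nhdsWithin_iff, Metric.eventually_nhds_iff] at hiso
  obtain ⟨δ', hδ', hδ'prop⟩ := hiso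
  set ρ : ℝ := min (δ' / 2) 1 with hρdef
  have hρ : 0 < ρ := by positivity
  have hρδ : ρ < δ' := lt_of_le_of_lt (min_le_left _ _) (by linarith)
  have hρ1 : ρ ≤ 1 := min_le_right _ _
  have hsphere_sub : Metric.sphere (0 : ℂ) ρ ⊆ Metric.ball (0 : ℂ) 2 := by
    intro t ht
    have : ‖t‖ = ρ := by simpa using ht
    simp only [Metric.mem_ball, dist_zero_right, this]
    linarith
  have hcball_sub : Metric.closedBall (0 : ℂ) ρ ⊆ Metric.ball (0 : ℂ) 2 := by
    intro t ht
    simp only [Metric.mem_closedBall, dist_zero_right] at ht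
    simp only [Metric.mem_ball, dist_zero_right]
    linarith
  -- minimum of ‖g‖ on the sphere
  have hsc : IsCompact (Metric.sphere (0 : ℂ) ρ) := isCompact_sphere 0 ρ
  have hsne : (Metric.sphere (0 : ℂ) ρ).Nonempty :=
    NormedSpace.sphere_nonempty.2 hρ.le
  obtain ⟨t₀, ht₀mem, ht₀min⟩ :=
    hsc.exists_isMinOn hsne ((hgd.continuousOn.mono hsphere_sub).norm)
  set m : ℝ := ‖g t₀‖ with hmdef
  have hm : 0 < m := by
    have ht₀ρ : ‖t₀‖ = ρ := by simpa using ht₀mem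
    have ht₀ne : t₀ ≠ 0 := by
      intro h; rw [h, norm_zero] at ht₀ρ; linarith
    have hdist : dist t₀ 0 < δ' := by rw [dist_zero_right, ht₀ρ]; exact hρδ
    exact norm_pos_iff.2 (hδ'prop hdist (Set.mem_compl_singleton_iff.mpr ht₀ne))
  have hmin : ∀ t ∈ Metric.sphere (0 : ℂ) ρ, m ≤ ‖g t‖ := fun t ht => ht₀min ht
  -- compact set K in Ω
  set K : Set (Fin n → ℂ) := L '' Metric.closedBall (0 : ℂ) ρ with hKdef
  have hKc : IsCompact K := (isCompact_closedBall _ _).image hLcont.continuous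
  have hKΩ : K ⊆ Ω := by
    rintro _ ⟨t, ht, rfl⟩
    exact hLmaps (hcball_sub ht)
  have hUK : TendstoUniformlyOn F f atTop K :=
    (tendstoLocallyUniformlyOn_iff_tendstoUniformlyOn_of_compact hKc).1 (hconv.mono hKΩ)
  have hev : ∀ᶠ k in atTop, ∀ x ∈ K, dist (f x) (F k x) < m / 2 :=
    Metric.tendstoUniformlyOn_iff.1 hUK (m / 2) (by positivity)
  filter_upwards [hev] with k hk
  by_contra hno
  push_neg at hno
  -- F k ∘ L has no zeros on the closed ball, so its inverse is holomorphic there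
  set gk : ℂ → ℂ := fun t => F k (L t) with hgkdef
  have hgkd : DifferentiableOn ℂ gk (Metric.ball (0 : ℂ) 2) :=
    (hF k).comp hLcont.differentiableOn hLmaps
  have hgkne : ∀ t ∈ Metric.closedBall (0 : ℂ) ρ, gk t ≠ 0 := by
    intro t ht h
    exact hno (L t) (hLmaps (hcball_sub ht)) h
  have hinvd : DifferentiableOn ℂ (fun t => (gk t)⁻¹) (Metric.closedBall (0 : ℂ) ρ) :=
    (hgkd.mono hcball_sub).inv hgkne
  have hdcc : DiffContOnCl ℂ (fun t => (gk t)⁻¹) (Metric.ball (0 : ℂ) ρ) := by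
    apply DifferentiableOn.diffContOnCl
    rwa [closure_ball (0 : ℂ) hρ.ne']
  -- bound on the frontier
  have hbound : ∀ t ∈ frontier (Metric.ball (0 : ℂ) ρ), ‖(gk t)⁻¹‖ ≤ 2 / m := by
    intro t ht
    rw [frontier_ball (0 : ℂ) hρ.ne'] at ht
    have hd : dist (f (L t)) (F k (L t)) < m / 2 :=
      hk (L t) ⟨t, Metric.sphere_subset_closedBall ht, rfl⟩
    have h1 : m ≤ ‖g t‖ := hmin t ht
    have h2 : ‖g t - gk t‖ < m / 2 := by
      simpa [hgdef, hgkdef, dist_eq_norm] using hd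
    have h3 : m / 2 ≤ ‖gk t‖ := by
      have := norm_sub_norm_le (g t) (gk t)
      linarith
    have heq : (m / 2)⁻¹ = 2 / m := by rw [inv_div]
    rw [norm_inv, ← heq]
    exact inv_anti₀ (by positivity) h3
  have h0cl : (0 : ℂ) ∈ closure (Metric.ball (0 : ℂ) ρ) := by
    rw [closure_ball (0 : ℂ) hρ.ne']
    simp [hρ.le]
  have hmax : ‖(gk 0)⁻¹‖ ≤ 2 / m :=
    Complex.norm_le_of_forall_mem_frontier_norm_le Metric.isBounded_ball hdcc hbound h0cl
  -- but gk 0 is small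
  have hd0 : dist (f (L 0)) (F k (L 0)) < m / 2 :=
    hk (L 0) ⟨0, by simp [hρ.le], rfl⟩
  have hgk0 : ‖gk 0‖ < m / 2 := by
    have hL0 : f (L 0) = 0 := by simpa [hgdef] using hg0
    have : ‖f (L 0) - F k (L 0)‖ < m / 2 := by
      simpa [dist_eq_norm] using hd0
    calc ‖gk 0‖ = ‖f (L 0) - F k (L 0)‖ := by
          simp [hgkdef, hL0, norm_sub_rev]
      _ < m / 2 := this
  have hgk0pos : 0 < ‖gk 0‖ := norm_pos_iff.2 (hgkne 0 (by simp [hρ.le]))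
  rw [norm_inv, inv_le_iff_one_le_mul₀ hgk0pos] at hmax
  have h2 : 2 / m * ‖gk 0‖ < 2 / m * (m / 2) :=
    mul_lt_mul_of_pos_left hgk0 (by positivity)
  have h3 : 2 / m * (m / 2) = 1 := by field_simp
  linarith
end
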